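/- Let μ be envy-free, σ the reformist envy-free matching with respect to μ (with σ(i) ≻_i μ(i) for all i), and suppose that for some agent i, exchanging μ(i) with σ(i) yields an envy-free matching μ′. Then the reformist envy-free matching with respect to μ′ is σ, and the shortest reformist sequence from μ has length exactly one more than the shortest reformist sequence from μ′ (restricted to the remaining agents after removing i). -/
import Mathlib


/-- An instance of the house allocation problem: each agent `i` has a finite set
`acc i` of acceptable items, and a strict total order on `acc i` represented by an
injective rank function (smaller rank = more preferred). -/
structure Instance (ι α : Type*) where
  acc : ι → Finset α
  rank : ι → α → ℕ
  rankInj : ∀ i, Set.InjOn (rank i) (acc i : Set α)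

variable {ι α : Type*}

/-- `I.Pref i x y` means agent `i` strictly prefers item `x` to item `y`. -/
def Instance.Pref (I : Instance ι α) (i : ι) (x y : α) : Prop :=
  x ∈ I.acc i ∧ y ∈ I.acc i ∧ I.rank i x < I.rank i y

/-- `I.WeakPref i x y` means `x = y` or agent `i` strictly prefers `x` to `y`. -/
def Instance.WeakPref (I : Instance ι α) (i : ι) (x y : α) : Prop :=
  x = y ∨ I.Pref i x y

/-- A matching assigns to each agent an acceptable item, injectively. -/
def IsMatching (I : Instance ι α) (μ : ι → α) : Prop :=
  Function.Injective μ ∧ ∀ i, μ i ∈ I.acc i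

/-- A matching is envy-free if no agent prefers another agent's item to her own. -/
def EnvyFree (I : Instance ι α) (μ : ι → α) : Prop :=
  IsMatching I μ ∧ ∀ i j, i ≠ j → ¬ I.Pref i (μ j) (μ i)

/-- `Step I μ σ` (written μ ⤳ σ in the paper): both `μ` and `σ` are envy-free
matchings and exactly one agent exchanges her item for a strictly better one. -/
def Step (I : Instance ι α) (μ σ : ι → α) : Prop :=
  EnvyFree I μ ∧ EnvyFree I σ ∧ ∃ i, I.Pref i (σ i) (μ i) ∧ ∀ j, j ≠ i → μ j = σ j

/-- `IsSeq I f ℓ`: the matchings `f 0 ⤳ f 1 ⤳ ... ⤳ f ℓ` form a sequence of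
single-agent improving exchanges preserving envy-freeness. -/
def IsSeq (I : Instance ι α) (f : ℕ → ι → α) (ℓ : ℕ) : Prop :=
  ∀ t, t < ℓ → Step I (f t) (f (t + 1))

/-- `σ` is a reformist envy-free matching with respect to `μ`: it is reachable
from `μ` via ⤳ and admits no further improving exchange. -/
def Reformist (I : Instance ι α) (μ σ : ι → α) : Prop :=
  Relation.ReflTransGen (Step I) μ σ ∧ ∀ τ, ¬ Step I σ τ

/-- `PrefList I i l`: agent `i`'s acceptable items are exactly those of `l`,
and `l` lists them from most preferred to least preferred. -/
def PrefList [DecidableEq α] (I : Instance ι α) (i : ι) (l : List α) : Prop :=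
  I.acc i = l.toFinset ∧ List.Chain' (I.Pref i) l

/-- The instance obtained by removing agent `i` and deleting item `x` from all
acceptable sets. -/
def restrictInstance [DecidableEq α] (I : Instance ι α) (i : ι) (x : α) :
    Instance {j : ι // j ≠ i} α where
  acc := fun j => (I.acc j.1).erase x
  rank := fun j => I.rank j.1
  rankInj := fun j =>
    (I.rankInj j.1).mono (Finset.coe_subset.mpr (Finset.erase_subset _ _))

lemma pref_trans {I : Instance ι α} {i : ι} {x y z : α}
    (h1 : I.Pref i x y) (h2 : I.Pref i y z) : I.Pref i x z :=
  ⟨h1.1, h2.2.1, h1.2.2.trans h2.2.2⟩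

lemma pref_irrefl {I : Instance ι α} {i : ι} {x : α} : ¬ I.Pref i x x :=
  fun h => lt_irrefl _ h.2.2

lemma step_irrefl {I : Instance ι α} {a : ι → α} : ¬ Step I a a := by
  rintro ⟨-, -, k, hk, -⟩; exact pref_irrefl hk

lemma seq_mono {I : Instance ι α} {f : ℕ → ι → α} {ℓ : ℕ}
    (hf : IsSeq I f ℓ) (j : ι) :
    ∀ s, s ≤ ℓ → ∀ t, t ≤ s → f s j = f t j ∨ I.Pref j (f s j) (f t j) := by
  intro s
  induction s with
  | zero =>
    intro _ t ht
    have : t = 0 := Nat.le_zero.1 ht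
    subst this; exact Or.inl rfl
  | succ s ih =>
    intro hs t ht
    rcases Nat.lt_or_ge t (s + 1) with h | h
    · obtain ⟨-, -, k, hk, hoth⟩ := hf s (by omega)
      have prev := ih (by omega) t (by omega)
      by_cases hjk : j = k
      · subst hjk
        rcases prev with h1 | h1
        · exact Or.inr (h1 ▸ hk)
        · exact Or.inr (pref_trans hk h1)
      · have heq := hoth j hjk
        rw [← heq]; exact prev
    · have : t = s + 1 := by omega
      subst this; exact Or.inl rfl

lemma seq_envyFree {I : Instance ι α} {f : ℕ → ι → α} {ℓ : ℕ}
    (hf : IsSeq I f ℓ) (hℓ : 0 < ℓ) {t : ℕ} (ht : t ≤ ℓ) : EnvyFree I (f t) := by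
  rcases Nat.lt_or_ge t ℓ with h | h
  · exact (hf t h).1
  · have htl : t = ℓ := le_antisymm ht h
    have := (hf (ℓ - 1) (by omega)).2.1
    have h1 : ℓ - 1 + 1 = t := by omega
    rwa [h1] at this

lemma exists_seq_of_rtg {I : Instance ι α} {μ σ : ι → α}
    (h : Relation.ReflTransGen (Step I) μ σ) :
    ∃ (ℓ : ℕ) (f : ℕ → ι → α), f 0 = μ ∧ IsSeq I f ℓ ∧ f ℓ = σ := by
  induction h with
  | refl => exact ⟨0, fun _ => μ, rfl, fun t ht => absurd ht (Nat.not_lt_zero t), rfl⟩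
  | @tail b c _ hbc ih =>
    obtain ⟨ℓ, f, h0, hseq, hend⟩ := ih
    refine ⟨ℓ + 1, fun t => if t ≤ ℓ then f t else c, by simp [h0], ?_, by simp⟩
    intro t ht
    rcases Nat.lt_or_ge t ℓ with h | h
    · simpa [Nat.le_of_lt h, Nat.succ_le_of_lt h] using hseq t h
    · have : t = ℓ := by omega
      subst this
      simpa [hend] using hbc

lemma rtg_of_seq {I : Instance ι α} {f : ℕ → ι → α} {ℓ : ℕ}
    (hf : IsSeq I f ℓ) (t : ℕ) :
    ∀ s, t ≤ s → s ≤ ℓ → Relation.ReflTransGen (Step I) (f t) (f s) := by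
  intro s
  induction s with
  | zero =>
    intro h1 _
    have : t = 0 := Nat.le_zero.1 h1
    subst this; exact Relation.ReflTransGen.refl
  | succ s ih =>
    intro h1 h2
    rcases Nat.lt_or_ge t (s + 1) with h | h
    · exact Relation.ReflTransGen.tail (ih (by omega) (by omega)) (hf s (by omega))
    · have : t = s + 1 := by omega
      subst this; exact Relation.ReflTransGen.refl

lemma compress_seq {M : Type*} {R : M → M → Prop} (hirr : ∀ a, ¬ R a a) :
    ∀ (L : ℕ) (ν : ℕ → M), (∀ t, t < L → ν t = ν (t + 1) ∨ R (ν t) (ν (t + 1))) →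
    ∃ (m : ℕ) (f : ℕ → M), m ≤ L ∧ f 0 = ν 0 ∧ (∀ t, t < m → R (f t) (f (t + 1))) ∧ f m = ν L ∧
      ((∃ t, t < L ∧ ν t = ν (t + 1)) → m < L) := by
  intro L
  induction L with
  | zero =>
    intro ν _
    exact ⟨0, ν, le_refl _, rfl, fun t ht => absurd ht (Nat.not_lt_zero t), rfl,
      by rintro ⟨t, ht, -⟩; omega⟩
  | succ L ih =>
    intro ν hν
    obtain ⟨m, f, hm, h0, hstep, hend, hlt⟩ := ih ν (fun t ht => hν t (by omega))
    rcases hν L (by omega) with heq | hR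
    · exact ⟨m, f, by omega, h0, hstep, hend.trans heq, fun _ => by omega⟩
    · refine ⟨m + 1, fun t => if t ≤ m then f t else ν (L + 1), by omega, by simp [h0],
        ?_, by simp, ?_⟩
      · intro t ht
        rcases Nat.lt_or_ge t m with h | h
        · simpa [Nat.le_of_lt h, Nat.succ_le_of_lt h] using hstep t h
        · have : t = m := by omega
          subst this
          simpa [hend] using hR
      · rintro ⟨t, ht, heq⟩
        rcases Nat.lt_or_ge t L with h | h
        · have := hlt ⟨t, h, heq⟩; omega
        · have : t = L := by omega
          subst this
          rw [heq] at hR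
          exact absurd hR (hirr _)

def liftMatch [DecidableEq ι] (σ : ι → α) (i : ι) (w : {j : ι // j ≠ i} → α) : ι → α :=
  fun j => if h : j = i then σ i else w ⟨j, h⟩

lemma liftMatch_apply_ne [DecidableEq ι] (σ : ι → α) (i : ι) (w : {j : ι // j ≠ i} → α)
    (j : {j : ι // j ≠ i}) : liftMatch σ i w j.1 = w j := by
  unfold liftMatch
  rw [dif_neg j.2]

lemma liftMatch_apply_eq [DecidableEq ι] (σ : ι → α) (i : ι) (w : {j : ι // j ≠ i} → α) :
    liftMatch σ i w i = σ i := dif_pos rfl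

/-- if agent `i` can exchange `μ i` directly for `σ i` keeping
envy-freeness, then `σ` is still the reformist matching with respect to the
updated matching `μ'`, and the shortest reformist sequence from `μ` is exactly
one step longer than the shortest one from `μ'` in the instance restricted to
the remaining agents (with item `σ i` removed). -/
theorem shortest_after_direct_exchange [DecidableEq ι] [DecidableEq α]
    (I : Instance ι α) (μ σ : ι → α) (i : ι)
    (hμ : EnvyFree I μ) (hσ : Reformist I μ σ)
    (himp : ∀ j, I.Pref j (σ j) (μ j))
    (hEF : EnvyFree I (Function.update μ i (σ i))) :
    Reformist I (Function.update μ i (σ i)) σ ∧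
    sInf {ℓ | ∃ f : ℕ → ι → α, f 0 = μ ∧ IsSeq I f ℓ ∧ f ℓ = σ} =
      sInf {ℓ | ∃ f : ℕ → {j : ι // j ≠ i} → α,
        f 0 = (fun j => Function.update μ i (σ i) j.1) ∧
        IsSeq (restrictInstance I i (σ i)) f ℓ ∧
        f ℓ = (fun j => σ j.1)} + 1 := by
  classical
  have σEF : EnvyFree I σ := by
    rcases Relation.ReflTransGen.cases_tail hσ.1 with h | ⟨b, hb, hbs⟩
    · rw [h]; exact hμ
    · exact hbs.2.1
  have hμine : μ i ≠ σ i := by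
    intro h
    have := (himp i).2.2
    rw [h] at this
    exact lt_irrefl _ this
  have hμσ : μ ≠ σ := fun h => hμine (congrFun h i)
  have rpref_to : ∀ (j : {j : ι // j ≠ i}) (x y : α),
      (restrictInstance I i (σ i)).Pref j x y → I.Pref j.1 x y := by
    rintro j x y ⟨hx, hy, hr⟩
    exact ⟨Finset.mem_of_mem_erase hx, Finset.mem_of_mem_erase hy, hr⟩
  -- agent `a ≠ i` never envies `σ i`-holder, once she holds something at least as
  -- good as `μ a`
  have noenvy_σi : ∀ (a : ι), a ≠ i → ∀ x : α,
      (x = μ a ∨ I.Pref a x (μ a)) → ¬ I.Pref a (σ i) x := by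
    intro a ha x hx hp
    have h1 : ¬ I.Pref a (σ i) (μ a) := by
      have := hEF.2 a i ha
      rwa [Function.update_self, Function.update_of_ne ha] at this
    rcases hx with h | h
    · exact h1 (h ▸ hp)
    · exact h1 (pref_trans hp h)
  -- the crucial lemma: lifting a suitable restricted envy-free matching
  have liftEF : ∀ w : {j : ι // j ≠ i} → α,
      EnvyFree (restrictInstance I i (σ i)) w →
      (∀ j, w j = σ j.1 ∨ I.Pref j.1 (σ j.1) (w j)) →
      (∀ j, w j = μ j.1 ∨ I.Pref j.1 (w j) (μ j.1)) →
      EnvyFree I (fun j => if h : j = i then σ i else w ⟨j, h⟩) := by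
    intro w hw hlow hhigh
    have hwmem : ∀ j, w j ∈ (I.acc j.1).erase (σ i) := hw.1.2
    have hwne : ∀ j, w j ≠ σ i := fun j => (Finset.mem_erase.1 (hwmem j)).1
    have hwacc : ∀ j, w j ∈ I.acc j.1 := fun j => Finset.mem_of_mem_erase (hwmem j)
    constructor
    · constructor
      · intro a b hab
        simp only at hab
        by_cases ha : a = i <;> by_cases hb : b = i
        · rw [ha, hb]
        · rw [dif_pos ha, dif_neg hb] at hab
          exact absurd hab.symm (hwne ⟨b, hb⟩)
        · rw [dif_neg ha, dif_pos hb] at hab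
          exact absurd hab (hwne ⟨a, ha⟩)
        · rw [dif_neg ha, dif_neg hb] at hab
          have := hw.1.1 hab
          simpa using congrArg Subtype.val this
      · intro j
        by_cases h : j = i
        · simp only [dif_pos h, h]
          exact σEF.1.2 i
        · simp only [dif_neg h]
          exact hwacc ⟨j, h⟩
    · intro a b hab hpref
      simp only at hpref
      by_cases ha : a = i <;> by_cases hb : b = i
      · exact hab (ha.trans hb.symm)
      · -- agent i envies b : the crucial case
        rw [dif_pos ha, dif_neg hb] at hpref
        subst ha
        set x := w ⟨b, hb⟩ with hxdef
        -- hpref : I.Pref a x (σ a)  (with a = i)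
        have hxr : ∀ l, σ l ≠ x := by
          intro l hl
          by_cases hli : l = a
          · exact hwne ⟨b, hb⟩ (hli ▸ hl).symm
          · exact σEF.2 a l (Ne.symm hli) (hl ▸ hpref)
        set τ := Function.update σ a x with hτdef
        have hτM : IsMatching I τ := by
          constructor
          · intro p q hpq
            by_cases hp : p = a <;> by_cases hq : q = a
            · rw [hp, hq]
            · rw [hτdef, hp, Function.update_self, Function.update_of_ne hq] at hpq
              exact absurd hpq.symm (hxr q)
            · rw [hτdef, hq, Function.update_self, Function.update_of_ne hp] at hpq
              exact absurd hpq (hxr p)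
            · rw [hτdef, Function.update_of_ne hp, Function.update_of_ne hq] at hpq
              exact σEF.1.1 hpq
          · intro p
            by_cases hp : p = a
            · rw [hτdef, hp, Function.update_self]
              exact hpref.1
            · rw [hτdef, Function.update_of_ne hp]
              exact σEF.1.2 p
        have hτnEF : ¬ EnvyFree I τ := by
          intro hE
          refine hσ.2 τ ⟨σEF, hE, a, ?_, ?_⟩
          · rw [hτdef, Function.update_self]
            exact hpref
          · intro j hj
            rw [hτdef, Function.update_of_ne hj]
        have hex : ∃ p q, p ≠ q ∧ I.Pref p (τ q) (τ p) := by
          by_contra hcon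
          push_neg at hcon
          exact hτnEF ⟨hτM, fun p q hpq hp => hcon p q hpq hp⟩
        obtain ⟨p, q, hpq, henvy⟩ := hex
        by_cases hpa : p = a
        · subst hpa
          rw [hτdef, Function.update_self, Function.update_of_ne (Ne.symm hpq)] at henvy
          exact σEF.2 p q hpq (pref_trans henvy hpref)
        · rw [hτdef, Function.update_of_ne hpa] at henvy
          by_cases hqa : q = a
          · rw [hqa, Function.update_self] at henvy
            -- henvy : I.Pref p x (σ p), p ≠ q = a = i
            by_cases hpb : p = b
            · rw [hpb, hxdef] at henvy
              rcases hlow ⟨b, hb⟩ with h | h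
              · exact pref_irrefl (h ▸ henvy)
              · exact pref_irrefl (pref_trans henvy h)
            · have hrd : (restrictInstance I a (σ a)).Pref ⟨p, hpa⟩ (w ⟨b, hb⟩) (w ⟨p, hpa⟩) := by
                refine ⟨Finset.mem_erase.2 ⟨hwne ⟨b, hb⟩, henvy.1⟩, hwmem ⟨p, hpa⟩, ?_⟩
                have h1 : I.rank p x < I.rank p (σ p) := henvy.2.2
                have h2 : I.rank p (σ p) ≤ I.rank p (w ⟨p, hpa⟩) := by
                  rcases hlow ⟨p, hpa⟩ with h | h
                  · rw [h]
                  · exact le_of_lt h.2.2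
                exact lt_of_lt_of_le h1 h2
              exact hw.2 ⟨p, hpa⟩ ⟨b, hb⟩ (fun hc => hpb (congrArg Subtype.val hc)) hrd
          · rw [Function.update_of_ne hqa] at henvy
            exact σEF.2 p q hpq henvy
      · -- agent a ≠ i envies i
        rw [dif_neg ha, dif_pos hb] at hpref
        rw [hb] at hab
        exact noenvy_σi a ha (w ⟨a, ha⟩) ((hhigh ⟨a, ha⟩).imp id id) hpref
      · rw [dif_neg ha, dif_neg hb] at hpref
        refine hw.2 ⟨a, ha⟩ ⟨b, hb⟩ (fun hc => hab (congrArg Subtype.val hc)) ?_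
        exact ⟨Finset.mem_erase.2 ⟨hwne ⟨b, hb⟩, hpref.1⟩, hwmem ⟨a, ha⟩, hpref.2.2⟩
  let S : Set ℕ := {ℓ | ∃ f : ℕ → ι → α, f 0 = μ ∧ IsSeq I f ℓ ∧ f ℓ = σ}
  let T : Set ℕ := {ℓ | ∃ f : ℕ → {j : ι // j ≠ i} → α,
      f 0 = (fun j => Function.update μ i (σ i) j.1) ∧
      IsSeq (restrictInstance I i (σ i)) f ℓ ∧
      f ℓ = (fun j => σ j.1)}
  -- restriction of a full sequence to the agents other than i
  have hrestr : ∀ L : ℕ, ∀ g : ℕ → ι → α, g 0 = μ → IsSeq I g L → g L = σ →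
      ∃ m, m < L ∧ m ∈ T := by
    intro L g hg0 hgseq hgL
    have hL : 0 < L := by
      rcases Nat.eq_zero_or_pos L with h | h
      · subst h; exact absurd (hg0.symm.trans hgL) hμσ
      · exact h
    have gEF : ∀ t, t ≤ L → EnvyFree I (g t) := fun t ht => seq_envyFree hgseq hL ht
    have key : ∀ t, t ≤ L → ∀ j, j ≠ i → g t j ≠ σ i := by
      intro t ht j hj hEq
      have hmono := seq_mono hgseq i L (le_refl L) t ht
      rw [hgL] at hmono
      rcases hmono with h | h
      · exact hj ((gEF t ht).1.1 (hEq.trans h))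
      · rw [← hEq] at h
        exact (gEF t ht).2 i j (Ne.symm hj) h
    have rEF : ∀ t, t ≤ L → EnvyFree (restrictInstance I i (σ i)) (fun j => g t j.1) := by
      intro t ht
      refine ⟨⟨?_, ?_⟩, ?_⟩
      · intro p q hpq
        exact Subtype.ext ((gEF t ht).1.1 hpq)
      · intro j
        exact Finset.mem_erase.2 ⟨key t ht j.1 j.2, (gEF t ht).1.2 j.1⟩
      · intro p q hpq hpref
        exact (gEF t ht).2 p.1 q.1 (fun hc => hpq (Subtype.ext hc)) (rpref_to p _ _ hpref)
    have lazy : ∀ t, t < L →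
        (fun j : {j : ι // j ≠ i} => g t j.1) = (fun j : {j : ι // j ≠ i} => g (t + 1) j.1) ∨
        Step (restrictInstance I i (σ i)) (fun j => g t j.1) (fun j => g (t + 1) j.1) := by
      intro t ht
      obtain ⟨-, -, k, hk, hoth⟩ := hgseq t ht
      by_cases hki : k = i
      · left
        funext j
        exact hoth j.1 (by rw [hki]; exact j.2)
      · right
        refine ⟨rEF t (by omega), rEF (t + 1) (by omega), ⟨k, hki⟩, ?_, ?_⟩
        · exact ⟨Finset.mem_erase.2 ⟨key (t + 1) (by omega) k hki, hk.1⟩,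
            Finset.mem_erase.2 ⟨key t (by omega) k hki, hk.2.1⟩, hk.2.2⟩
        · intro j hj
          exact hoth j.1 (fun hc => hj (Subtype.ext hc))
    have hieq : ∃ t, t < L ∧
        (fun j : {j : ι // j ≠ i} => g t j.1) = (fun j : {j : ι // j ≠ i} => g (t + 1) j.1) := by
      have hmv : ∃ t, t < L ∧ g t i ≠ g (t + 1) i := by
        by_contra hcon
        push_neg at hcon
        have hall : ∀ t, t ≤ L → g t i = g 0 i := by
          intro t
          induction t with
          | zero => intro _; rfl
          | succ t ih => intro ht; rw [← hcon t (by omega), ih (by omega)]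
        have := hall L (le_refl L)
        rw [hgL, hg0] at this
        exact hμine this.symm
      obtain ⟨t, ht, hne⟩ := hmv
      obtain ⟨-, -, k, hk, hoth⟩ := hgseq t ht
      have hki : k = i := by
        by_contra hc
        exact hne (hoth i (fun h => hc h.symm))
      exact ⟨t, ht, funext fun j => hoth j.1 (by rw [hki]; exact j.2)⟩
    obtain ⟨m, f, hm, hf0, hfstep, hfend, hmlt⟩ :=
      compress_seq (fun a => step_irrefl) L (fun t (j : {j : ι // j ≠ i}) => g t j.1) lazy
    refine ⟨m, hmlt hieq, f, ?_, hfstep, ?_⟩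
    · rw [hf0]
      funext j
      show g 0 j.1 = Function.update μ i (σ i) j.1
      rw [hg0, Function.update_of_ne j.2]
    · rw [hfend]
      funext j
      show g L j.1 = σ j.1
      rw [hgL]
  -- lifting a restricted sequence
  have hlift : ∀ m : ℕ, ∀ f : ℕ → {j : ι // j ≠ i} → α,
      f 0 = (fun j => Function.update μ i (σ i) j.1) →
      IsSeq (restrictInstance I i (σ i)) f m →
      f m = (fun j => σ j.1) →
      ∃ g : ℕ → ι → α, g 0 = μ ∧ g 1 = Function.update μ i (σ i) ∧
        IsSeq I g (m + 1) ∧ g (m + 1) = σ := by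
    intro m f hf0 hfseq hfend
    have hEFt : ∀ t, t ≤ m → EnvyFree (restrictInstance I i (σ i)) (f t) →
        EnvyFree I (liftMatch σ i (f t)) := by
      intro t ht hEFr
      refine liftEF (f t) hEFr ?_ ?_
      · intro j
        have hmono := seq_mono hfseq j m (le_refl m) t ht
        simp only [hfend] at hmono
        rcases hmono with h | h
        · exact Or.inl h.symm
        · exact Or.inr (rpref_to j _ _ h)
      · intro j
        have hmono := seq_mono hfseq j t ht 0 (Nat.zero_le t)
        simp only [hf0] at hmono
        rw [Function.update_of_ne j.2] at hmono
        rcases hmono with h | h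
        · exact Or.inl h
        · exact Or.inr (rpref_to j _ _ h)
    have hliftend : liftMatch σ i (f m) = σ := by
      funext j
      by_cases h : j = i
      · rw [h, liftMatch_apply_eq]
      · rw [show j = (⟨j, h⟩ : {j : ι // j ≠ i}).1 from rfl, liftMatch_apply_ne, hfend]
    have hlift0 : liftMatch σ i (f 0) = Function.update μ i (σ i) := by
      funext j
      by_cases h : j = i
      · rw [h, liftMatch_apply_eq, Function.update_self]
      · rw [show j = (⟨j, h⟩ : {j : ι // j ≠ i}).1 from rfl, liftMatch_apply_ne, hf0]
    refine ⟨fun t => if t = 0 then μ else liftMatch σ i (f (t - 1)), rfl, ?_, ?_, ?_⟩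
    · simpa using hlift0
    · intro t ht
      match t with
      | 0 =>
        show Step I μ (liftMatch σ i (f 0))
        rw [hlift0]
        refine ⟨hμ, hEF, i, ?_, ?_⟩
        · rw [Function.update_self]
          exact himp i
        · intro j hj
          rw [Function.update_of_ne hj]
      | (s + 1) =>
        have hs : s < m := by omega
        show Step I (liftMatch σ i (f s)) (liftMatch σ i (f (s + 1)))
        obtain ⟨hEFs, hEFs1, k, hk, hoth⟩ := hfseq s hs
        refine ⟨hEFt s (by omega) hEFs, hEFt (s + 1) (by omega) hEFs1, k.1, ?_, ?_⟩
        · rw [liftMatch_apply_ne, liftMatch_apply_ne]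
          exact rpref_to k _ _ hk
        · intro j hj
          by_cases hji : j = i
          · rw [hji, liftMatch_apply_eq, liftMatch_apply_eq]
          · rw [show j = (⟨j, hji⟩ : {j : ι // j ≠ i}).1 from rfl, liftMatch_apply_ne,
              liftMatch_apply_ne]
            exact hoth ⟨j, hji⟩ (fun hc => hj (congrArg Subtype.val hc))
    · exact hliftend
  -- conclusion
  have hST : ∀ L ∈ S, ∃ m ∈ T, m < L := by
    rintro L ⟨g, hg0, hgs, hgL⟩
    obtain ⟨m, hlt, hmT⟩ := hrestr L g hg0 hgs hgL
    exact ⟨m, hmT, hlt⟩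
  have hTS : ∀ m ∈ T, m + 1 ∈ S := by
    rintro m ⟨f, h0, hs, he⟩
    obtain ⟨g, hg0, -, hgs, hge⟩ := hlift m f h0 hs he
    exact ⟨g, hg0, hgs, hge⟩
  have hSne : S.Nonempty := by
    obtain ⟨ℓ, f, h0, hs, he⟩ := exists_seq_of_rtg hσ.1
    exact ⟨ℓ, f, h0, hs, he⟩
  obtain ⟨m0, hm0T, hm0lt⟩ := hST _ (Nat.sInf_mem hSne)
  have hTne : T.Nonempty := ⟨m0, hm0T⟩
  refine ⟨⟨?_, hσ.2⟩, ?_⟩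
  · obtain ⟨f, h0, hs, he⟩ := hm0T
    obtain ⟨g, hg0, hg1, hgs, hge⟩ := hlift m0 f h0 hs he
    have := rtg_of_seq hgs 1 (m0 + 1) (by omega) (le_refl _)
    rwa [hg1, hge] at this
  · show sInf S = sInf T + 1
    have h1 : sInf S ≤ sInf T + 1 := Nat.sInf_le (hTS _ (Nat.sInf_mem hTne))
    have h2 : sInf T ≤ m0 := Nat.sInf_le hm0T
    omega
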